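/- arXiv:quant-ph/0406214 — 4 statements merged into one kernel-verified Lean document; each statement's English description precedes it below -/
import Mathlib

section
/- For the logistic map sequence defined by x_{k+1} = a·x_k·(1 − x_k) with parameter a = 3.71 and initial value x_0 = 1/2^n, where n is a positive integer, there exists an integer m with 0 ≤ m ≤ 2n such that x_m > 1/2. -/
/-! While `x_k ≤ 1/2` the factor `1 - x_k` is at least `1/2`, so each step multiplies `x_k` by at
least `3.71 / 2 = 1.855`. Since `1.855² > 2`, after `2n` such steps `x_0 = 2⁻ⁿ` would have grown
to at least `1`, so the sequence must exceed `1/2` earlier. -/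

theorem half_mul_le_logistic {a x : ℝ} (ha : 0 ≤ a) (hx₀ : 0 ≤ x) (hx : x ≤ 1 / 2) :
    a / 2 * x ≤ a * x * (1 - x) := by
  nlinarith [mul_nonneg ha hx₀]

theorem half_pow_mul_le_logistic_iterate {a : ℝ} (ha : 0 ≤ a) {x : ℕ → ℝ}
    (hrec : ∀ k, x (k + 1) = a * x k * (1 - x k)) (hx₀ : 0 ≤ x 0) {N : ℕ}
    (hsmall : ∀ k < N, x k ≤ 1 / 2) : ∀ k ≤ N, (a / 2) ^ k * x 0 ≤ x k := by
  intro k hk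
  induction k with
  | zero => simp
  | succ k ih =>
    have hlow := ih (by omega)
    have hxk : 0 ≤ x k := (mul_nonneg (pow_nonneg (by positivity) k) hx₀).trans hlow
    calc (a / 2) ^ (k + 1) * x 0 = a / 2 * ((a / 2) ^ k * x 0) := by ring
      _ ≤ a / 2 * x k := by gcongr
      _ ≤ x (k + 1) := hrec k ▸ half_mul_le_logistic ha hxk (hsmall k (by omega))

theorem logistic_map_amplification_general (n : ℕ) (x : ℕ → ℝ)
    (h0 : x 0 = 1 / 2 ^ n)
    (hrec : ∀ k, x (k + 1) = 3.71 * x k * (1 - x k)) :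
    ∃ m : ℕ, m ≤ 2 * n ∧ x m > 1 / 2 := by
  by_contra! hsmall
  have hgrowth := half_pow_mul_le_logistic_iterate (by norm_num) hrec (by rw [h0]; positivity)
    (N := 2 * n) (fun k hk => hsmall k hk.le) (2 * n) le_rfl
  have hpow : (2 : ℝ) ^ n ≤ (3.71 / 2) ^ (2 * n) := by
    rw [pow_mul]
    exact pow_le_pow_left₀ (by norm_num) (by norm_num) n
  have hone : (1 : ℝ) ≤ (3.71 / 2) ^ (2 * n) * x 0 := by
    rw [h0, mul_one_div, le_div_iff₀ (by positivity), one_mul]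
    exact hpow
  linarith [hsmall (2 * n) le_rfl]

/-- For the logistic map sequence `x_{k+1} = 3.71 * x_k * (1 - x_k)` with initial value
`x_0 = 1/2^n` (`n` a positive integer), there exists `m` with `0 ≤ m ≤ 2n` and `x_m > 1/2`. -/
theorem logistic_map_amplification (n : ℕ) (hn : 0 < n) (x : ℕ → ℝ)
    (h0 : x 0 = 1 / 2 ^ n)
    (hrec : ∀ k, x (k + 1) = 3.71 * x k * (1 - x k)) :
    ∃ m : ℕ, m ≤ 2 * n ∧ x m > 1 / 2 :=
  logistic_map_amplification_general n x h0 hrec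
end

section
/- Let n be a positive integer and t : Fin 2^n → Bool. In EuclideanSpace ℂ (Fin 2^n × Bool), define v by v(i,b) = 2^{-n/2} if b = t(i) and 0 otherwise, and let P be the orthogonal projection onto the span of the basis vectors e_{(i,true)}. Let r be the cardinality of {i : Fin 2^n | t(i) = true}. Then ‖Pv‖² = r/2^n. -/
lemma EuclideanSpace.norm_sq_eq_sum_norm_sq_apply_true {𝕜 ι : Type*} [RCLike 𝕜] [Fintype ι]
    (x : EuclideanSpace 𝕜 (ι × Bool)) (hx : ∀ i, x (i, false) = 0) :
    ‖x‖ ^ 2 = ∑ i, ‖x (i, true)‖ ^ 2 := by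
  simp [EuclideanSpace.norm_sq_eq, Fintype.sum_prod_type, hx]

lemma RCLike.norm_inv_ofReal_sqrt_sq {𝕜 : Type*} [RCLike 𝕜] {a : ℝ} (ha : 0 ≤ a) :
    ‖((√a : ℝ) : 𝕜)⁻¹‖ ^ 2 = a⁻¹ := by
  rw [norm_inv, RCLike.norm_ofReal, abs_of_nonneg (Real.sqrt_nonneg a), inv_pow, Real.sq_sqrt ha]

theorem sat_projection_norm_sq_general (n : ℕ) (t : Fin (2 ^ n) → Bool)
    (v Pv : EuclideanSpace ℂ (Fin (2 ^ n) × Bool))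
    (hv : ∀ i b, v (i, b) = if b = t i then ((Real.sqrt (2 ^ n) : ℝ) : ℂ)⁻¹ else 0)
    (hPv : ∀ i, Pv (i, true) = v (i, true) ∧ Pv (i, false) = 0)
    (r : ℕ) (hr : r = (Finset.univ.filter fun i => t i = true).card) :
    ‖Pv‖ ^ 2 = (r : ℝ) / 2 ^ n := by
  have hcoord : ∀ i, ‖Pv (i, true)‖ ^ 2 = if t i = true then (2 ^ n : ℝ)⁻¹ else 0 := by
    intro i
    rw [(hPv i).1, hv]
    by_cases h : t i = true
    · simp only [h, if_true]
      exact RCLike.norm_inv_ofReal_sqrt_sq (by positivity)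
    · simp [h]
  rw [EuclideanSpace.norm_sq_eq_sum_norm_sq_apply_true Pv (fun i => (hPv i).2),
    Fintype.sum_congr _ _ hcoord, ← Finset.sum_filter, Finset.sum_const, hr, nsmul_eq_mul,
    div_eq_mul_inv]

/-- In the OM quantum SAT algorithm, `‖P v‖² = r/2^n` where `r` is the number of
satisfying truth assignments. -/
theorem sat_projection_norm_sq (n : ℕ) (hn : 0 < n) (t : Fin (2 ^ n) → Bool)
    (v Pv : EuclideanSpace ℂ (Fin (2 ^ n) × Bool))
    (hv : ∀ i b, v (i, b) = if b = t i then ((Real.sqrt (2 ^ n) : ℝ) : ℂ)⁻¹ else 0)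
    (hPv : ∀ i, Pv (i, true) = v (i, true) ∧ Pv (i, false) = 0)
    (r : ℕ) (hr : r = (Finset.univ.filter fun i => t i = true).card) :
    ‖Pv‖ ^ 2 = (r : ℝ) / 2 ^ n :=
  sat_projection_norm_sq_general n t v Pv hv hPv r hr
end

section
/- Let γ ∈ ℂ with Re γ > 0, let D = |e₀⟩⟨e₁| be the 2×2 matrix unit, and define L(ρ) = i·(Im γ)·(ρ·D†D − D†D·ρ) − (Re γ)·(D†D·ρ + ρ·D†D) + (Re γ)·D·ρ·D†. If ρ is any 2×2 density matrix (Hermitian, positive semidefinite, trace 1) with L(ρ) = 0, then ρ = |e₀⟩⟨e₀|; i.e., ρ₀ = |e₀⟩⟨e₀| is the unique invariant state. -/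
/-!
For the lowering operator `D`, `D†D` is the projection onto `e₁` and `D ρ D† = ρ₁₁ |e₀⟩⟨e₀|`,
so the generator acts entrywise: it scales `ρ₁₁` by `-2 Re γ` (feeding it into `ρ₀₀`) and the
coherences `ρ₀₁`, `ρ₁₀` by `-γ̄` and `-γ`. When `Re γ ≠ 0` its kernel is therefore spanned by
`|e₀⟩⟨e₀|`, and the trace condition fixes the remaining entry.
-/

open scoped ComplexOrder
open Matrix Complex ComplexConjugate

noncomputable def lindbladGenerator {n : Type*} [Fintype n] (γ : ℂ) (D ρ : Matrix n n ℂ) :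
    Matrix n n ℂ :=
  (I * (γ.im : ℂ)) • (ρ * (Dᴴ * D) - (Dᴴ * D) * ρ)
    - (γ.re : ℂ) • ((Dᴴ * D) * ρ + ρ * (Dᴴ * D))
    + (γ.re : ℂ) • (D * ρ * Dᴴ)

theorem lindbladGenerator_lowering (γ : ℂ) (ρ : Matrix (Fin 2) (Fin 2) ℂ) :
    lindbladGenerator γ !![0, 1; 0, 0] ρ =
      !![γ.re * ρ 1 1, -conj γ * ρ 0 1; -γ * ρ 1 0, -2 * γ.re * ρ 1 1] := by
  have hDH : (!![0, 1; 0, 0] : Matrix (Fin 2) (Fin 2) ℂ)ᴴ = !![0, 0; 1, 0] := by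
    ext i j; fin_cases i <;> fin_cases j <;> simp
  have hDD : (!![0, 1; 0, 0] : Matrix (Fin 2) (Fin 2) ℂ)ᴴ * !![0, 1; 0, 0] = !![0, 0; 0, 1] := by
    rw [hDH]; ext i j; fin_cases i <;> fin_cases j <;> simp
  rw [lindbladGenerator, hDD, hDH, eta_fin_two ρ]
  ext i j
  fin_cases i <;> fin_cases j <;> simp [Complex.ext_iff] <;> and_intros <;> ring

theorem eq_of_lindbladGenerator_lowering_eq_zero {γ : ℂ} (hγ : γ.re ≠ 0)
    {ρ : Matrix (Fin 2) (Fin 2) ℂ} (h : lindbladGenerator γ !![0, 1; 0, 0] ρ = 0) :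
    ρ = !![ρ 0 0, 0; 0, 0] := by
  have hγ₀ : γ ≠ 0 := fun h₀ => hγ (by simp [h₀])
  have hentry (i j : Fin 2) := congr_fun₂ ((lindbladGenerator_lowering γ ρ).symm.trans h) i j
  have h₀₁ : ρ 0 1 = 0 := by simpa [hγ₀] using hentry 0 1
  have h₁₀ : ρ 1 0 = 0 := by simpa [hγ₀] using hentry 1 0
  have h₁₁ : ρ 1 1 = 0 := by simpa [hγ] using hentry 0 0
  conv_lhs => rw [eta_fin_two ρ, h₀₁, h₁₀, h₁₁]

theorem invariant_state_unique_general (γ : ℂ) (hγ : 0 < γ.re)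
    (D : Matrix (Fin 2) (Fin 2) ℂ) (hD : D = !![0, 1; 0, 0])
    (L : Matrix (Fin 2) (Fin 2) ℂ → Matrix (Fin 2) (Fin 2) ℂ)
    (hL : ∀ ρ, L ρ =
      (Complex.I * (γ.im : ℂ)) • (ρ * (Dᴴ * D) - (Dᴴ * D) * ρ)
      - (γ.re : ℂ) • ((Dᴴ * D) * ρ + ρ * (Dᴴ * D))
      + (γ.re : ℂ) • (D * ρ * Dᴴ))
    (ρ : Matrix (Fin 2) (Fin 2) ℂ)
    (htr : ρ.trace = 1)
    (hinv : L ρ = 0) :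
    ρ = !![1, 0; 0, 0] := by
  subst hD
  have hρ : ρ = !![ρ 0 0, 0; 0, 0] :=
    eq_of_lindbladGenerator_lowering_eq_zero hγ.ne' ((hL ρ).symm.trans hinv)
  have h₀₀ : ρ 0 0 = 1 := by rwa [hρ, trace_fin_two_of, add_zero] at htr
  rw [hρ, h₀₀]

/-- If `Re γ > 0`, any density matrix `ρ` with `L(ρ) = 0` for the Lindblad generator
`L(ρ) = i(Im γ)[ρ, D†D] − (Re γ){ρ, D†D} + (Re γ) D ρ D†` (`D = |e₀⟩⟨e₁|`) equals
`|e₀⟩⟨e₀|`: the invariant state is unique. -/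
theorem invariant_state_unique (γ : ℂ) (hγ : 0 < γ.re)
    (D : Matrix (Fin 2) (Fin 2) ℂ) (hD : D = !![0, 1; 0, 0])
    (L : Matrix (Fin 2) (Fin 2) ℂ → Matrix (Fin 2) (Fin 2) ℂ)
    (hL : ∀ ρ, L ρ =
      (Complex.I * (γ.im : ℂ)) • (ρ * (Dᴴ * D) - (Dᴴ * D) * ρ)
      - (γ.re : ℂ) • ((Dᴴ * D) * ρ + ρ * (Dᴴ * D))
      + (γ.re : ℂ) • (D * ρ * Dᴴ))
    (ρ : Matrix (Fin 2) (Fin 2) ℂ)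
    (hherm : ρ.IsHermitian) (hpsd : ρ.PosSemidef) (htr : ρ.trace = 1)
    (hinv : L ρ = 0) :
    ρ = !![1, 0; 0, 0] :=
  invariant_state_unique_general γ hγ D hD L hL ρ htr hinv
end

section
/- Let ρ be a d×d density matrix, let {f_j}_{j=1}^d be an orthonormal basis of ℂ^d with rank-one projections P_j = |f_j⟩⟨f_j|, and let Λ be the channel Λ(σ) = Σ_j P_j σ P_j. Then for every orthogonal Schatten decomposition ρ = Σ_n λ_n E_n (where the E_n are mutually orthogonal rank-one projections, λ_n > 0, and Σ_n λ_n = 1), the quantity Σ_n λ_n · S^U(Λ(E_n), Λ(ρ)) is at most min{S(ρ), S(Λρ)}; consequently Ohya's quantum mutual entropy I₁(ρ,Λ), the supremum over all such decompositions, satisfies I₁(ρ,Λ) ≤ min{S(ρ), S(Λρ)}. -/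
/-- The von Neumann entropy `S(A) = Σᵢ η(λᵢ(A))` with `η(x) = −x·log x` (and `η(0)=0`),
where `λᵢ(A)` are the eigenvalues of the Hermitian matrix `A`. -/
noncomputable def vnEntropy {d : ℕ} (A : Matrix (Fin d) (Fin d) ℂ) : ℝ :=
  if h : A.IsHermitian then ∑ i, -(h.eigenvalues i * Real.log (h.eigenvalues i)) else 0

open scoped ComplexOrder

open Polynomial Matrix in
lemma aux_charpoly_conj {d : ℕ} (U B : Matrix (Fin d) (Fin d) ℂ)
    (hU : U ∈ Matrix.unitaryGroup (Fin d) ℂ) :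
    (U * B * Uᴴ).charpoly = B.charpoly := by
  have h1 : U * Uᴴ = 1 := Matrix.mem_unitaryGroup_iff.mp hU
  have h2 : Uᴴ * U = 1 := Matrix.mem_unitaryGroup_iff'.mp hU
  have key : Matrix.charmatrix (U * B * Uᴴ)
      = (U.map C) * Matrix.charmatrix B * (Uᴴ.map C) := by
    rw [Matrix.charmatrix, Matrix.charmatrix, Matrix.mul_sub, Matrix.sub_mul]
    congr 1
    · have hc : U.map C * Matrix.scalar (Fin d) (X : ℂ[X])
          = Matrix.scalar (Fin d) (X : ℂ[X]) * U.map C :=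
        (Matrix.scalar_commute (X : ℂ[X]) (fun r => Commute.all _ r) (U.map C)).symm
      rw [hc, Matrix.mul_assoc, ← Matrix.map_mul, h1]
      simp
    · simp only [RingHom.mapMatrix_apply]
      rw [← Matrix.map_mul, ← Matrix.map_mul]
  rw [Matrix.charpoly, Matrix.charpoly, key, Matrix.det_mul, Matrix.det_mul,
    mul_comm, ← mul_assoc, ← Matrix.det_mul, ← Matrix.map_mul, h2]
  simp

open Polynomial Matrix in
lemma aux_charpoly_diag {d : ℕ} (c : Fin d → ℂ) :
    (Matrix.diagonal c).charpoly = ∏ i, (X - C (c i)) := by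
  rw [Matrix.charpoly_of_upperTriangular _ (Matrix.blockTriangular_diagonal c)]
  simp

open Polynomial in
lemma aux_multiset_eq {d : ℕ} (a b : Fin d → ℂ)
    (h : ∏ i, (X - C (a i)) = ∏ i, (X - C (b i))) :
    Multiset.map a Finset.univ.val = Multiset.map b Finset.univ.val := by
  have ha : (∏ i, (X - C (a i))) = ((Multiset.map a Finset.univ.val).map
      (fun r => X - C r)).prod := by
    rw [Multiset.map_map]; rfl
  have hb : (∏ i, (X - C (b i))) = ((Multiset.map b Finset.univ.val).map
      (fun r => X - C r)).prod := by
    rw [Multiset.map_map]; rfl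
  have := congrArg Polynomial.roots (ha ▸ hb ▸ h)
  rwa [Polynomial.roots_multiset_prod_X_sub_C, Polynomial.roots_multiset_prod_X_sub_C] at this

lemma aux_sum_eq {d : ℕ} (a b : Fin d → ℝ) (φ : ℝ → ℝ)
    (h : Multiset.map (fun i => ((a i : ℝ) : ℂ)) Finset.univ.val
       = Multiset.map (fun i => ((b i : ℝ) : ℂ)) Finset.univ.val) :
    ∑ i, φ (a i) = ∑ i, φ (b i) := by
  have := congrArg (fun m : Multiset ℂ => (m.map (fun z => φ z.re)).sum) h
  simpa [Multiset.map_map, Function.comp_def, Finset.sum] using this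

open Matrix in
lemma aux_conj_diag_entry {d : ℕ} (U : Matrix (Fin d) (Fin d) ℂ) (w : Fin d → ℂ) (a b : Fin d) :
    (U * Matrix.diagonal w * Uᴴ) a b = ∑ j, w j * U a j * (starRingEnd ℂ) (U b j) := by
  rw [Matrix.mul_apply]
  congr 1; funext j
  rw [Matrix.mul_apply, Finset.sum_mul]
  rw [Finset.sum_eq_single j]
  · simp only [Matrix.diagonal_apply_eq, Matrix.conjTranspose_apply, RCLike.star_def]; ring
  · intro x _ hx; simp [Matrix.diagonal_apply_ne _ hx]
  · intro hx; exact absurd (Finset.mem_univ j) hx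

open Matrix in
lemma aux_unitary_of_orthonormal {d : ℕ} (g : Fin d → EuclideanSpace ℂ (Fin d))
    (hg : Orthonormal ℂ g) :
    (Matrix.of fun a j => g j a) ∈ Matrix.unitaryGroup (Fin d) ℂ := by
  rw [Matrix.mem_unitaryGroup_iff']
  ext i j
  have h := orthonormal_iff_ite.mp hg i j
  rw [PiLp.inner_apply] at h
  simp only [Matrix.mul_apply, Matrix.conjTranspose_apply, Matrix.of_apply, Matrix.one_apply,
    Matrix.star_apply]
  simpa [mul_comm] using h

open Matrix in
lemma aux_completeness {d : ℕ} (g : Fin d → EuclideanSpace ℂ (Fin d))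
    (hg : Orthonormal ℂ g) (a b : Fin d) :
    ∑ j, g j a * (starRingEnd ℂ) (g j b) = if a = b then 1 else 0 := by
  have h1 : (Matrix.of fun a j => g j a) * (Matrix.of fun a j => g j a)ᴴ = 1 :=
    Matrix.mem_unitaryGroup_iff.mp (aux_unitary_of_orthonormal g hg)
  have := congrFun (congrFun h1 a) b
  rw [Matrix.mul_apply] at this
  simpa [Matrix.conjTranspose_apply, Matrix.one_apply] using this

open Polynomial Matrix in
lemma aux_entropy_onb {d : ℕ} (A : Matrix (Fin d) (Fin d) ℂ) (hA : A.IsHermitian)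
    (g : Fin d → EuclideanSpace ℂ (Fin d)) (hg : Orthonormal ℂ g) (c : Fin d → ℝ)
    (h : ∀ a b, A a b = ∑ j, ((c j : ℝ) : ℂ) * g j a * (starRingEnd ℂ) (g j b))
    (φ : ℝ → ℝ) :
    ∑ i, φ (hA.eigenvalues i) = ∑ j, φ (c j) := by
  set U : Matrix (Fin d) (Fin d) ℂ := Matrix.of fun a j => g j a with hUdef
  have hU : U ∈ Matrix.unitaryGroup (Fin d) ℂ := aux_unitary_of_orthonormal g hg
  have hAU : A = U * Matrix.diagonal (fun j => ((c j : ℝ) : ℂ)) * Uᴴ := by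
    ext a b; rw [aux_conj_diag_entry, h a b]; rfl
  have hspec := hA.spectral_theorem
  have hV : (hA.eigenvectorUnitary : Matrix (Fin d) (Fin d) ℂ) ∈ Matrix.unitaryGroup (Fin d) ℂ :=
    hA.eigenvectorUnitary.2
  have hc1 : A.charpoly = ∏ i, (X - C ((c i : ℝ) : ℂ)) := by
    rw [hAU, aux_charpoly_conj _ _ hU, aux_charpoly_diag]
  have hc2 : A.charpoly = ∏ i, (X - C ((hA.eigenvalues i : ℝ) : ℂ)) := by
    conv_lhs => rw [hspec]
    have : star (hA.eigenvectorUnitary : Matrix (Fin d) (Fin d) ℂ)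
        = (hA.eigenvectorUnitary : Matrix (Fin d) (Fin d) ℂ)ᴴ := rfl
    rw [Unitary.conjStarAlgAut_apply, this, aux_charpoly_conj _ _ hV, aux_charpoly_diag]
    rfl
  exact (aux_sum_eq _ _ φ (aux_multiset_eq _ _ (hc1.symm.trans hc2))).symm

open Matrix in
lemma aux_rank_one {d : ℕ} (B : Matrix (Fin d) (Fin d) ℂ) (h1 : B.IsHermitian)
    (h2 : B * B = B) (h3 : B.trace = 1) :
    ∃ v : EuclideanSpace ℂ (Fin d), ∀ a b, B a b = v a * (starRingEnd ℂ) (v b) := by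
  set V : Matrix (Fin d) (Fin d) ℂ := (h1.eigenvectorUnitary : Matrix (Fin d) (Fin d) ℂ)
  set μ := h1.eigenvalues
  have hVU : V ∈ Matrix.unitaryGroup (Fin d) ℂ := h1.eigenvectorUnitary.2
  have hV1 : V * Vᴴ = 1 := Matrix.mem_unitaryGroup_iff.mp hVU
  have hV2 : Vᴴ * V = 1 := Matrix.mem_unitaryGroup_iff'.mp hVU
  have hD : Vᴴ * B * V = Matrix.diagonal (fun i => ((μ i : ℝ) : ℂ)) := by
    have := h1.conjStarAlgAut_star_eigenvectorUnitary
    rw [Unitary.conjStarAlgAut_apply, Unitary.coe_star, star_star] at this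
    exact this
  have hDD : ∀ i, ((μ i : ℝ) : ℂ) * ((μ i : ℝ) : ℂ) = ((μ i : ℝ) : ℂ) := by
    intro i
    have : (Vᴴ * B * V) * (Vᴴ * B * V) = Vᴴ * B * V := by
      calc (Vᴴ * B * V) * (Vᴴ * B * V) = Vᴴ * B * (V * Vᴴ) * B * V := by
            simp only [Matrix.mul_assoc]
        _ = Vᴴ * (B * B) * V := by rw [hV1]; simp only [Matrix.mul_assoc, Matrix.mul_one]
        _ = Vᴴ * B * V := by rw [h2, Matrix.mul_assoc]
    rw [hD, Matrix.diagonal_mul_diagonal] at this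
    have := congrFun (congrFun this i) i
    simpa using this
  have hμ01 : ∀ i, μ i = 0 ∨ μ i = 1 := by
    intro i
    have := hDD i
    have h' : μ i * μ i = μ i := by exact_mod_cast this
    have h0 : μ i * (μ i - 1) = 0 := by ring_nf; linarith [h']
    rcases mul_eq_zero.mp h0 with h | h
    · exact Or.inl h
    · right; linarith [sub_eq_zero.mp h]
  have htr : ∑ i, μ i = 1 := by
    have : (Vᴴ * B * V).trace = B.trace := by
      rw [Matrix.trace_mul_cycle, hV1, Matrix.one_mul]
    rw [hD, Matrix.trace_diagonal, h3] at this
    have : ((∑ i, μ i : ℝ) : ℂ) = 1 := by push_cast; exact this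
    exact_mod_cast this
  have hcard : (Finset.univ.filter (fun i => μ i = 1)).card = 1 := by
    have : ∑ i, μ i = ((Finset.univ.filter (fun i => μ i = 1)).card : ℝ) := by
      rw [Finset.card_eq_sum_ones]
      push_cast
      rw [← Finset.sum_filter_add_sum_filter_not Finset.univ (fun i => μ i = 1) μ]
      have hz : ∑ i ∈ Finset.univ.filter (fun i => ¬ μ i = 1), μ i = 0 :=
        Finset.sum_eq_zero (fun i hi => by
          rcases hμ01 i with h | h
          · exact h
          · exact absurd h (Finset.mem_filter.mp hi).2)
      rw [hz, add_zero]
      exact Finset.sum_congr rfl (fun i hi => (Finset.mem_filter.mp hi).2)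
    rw [htr] at this
    exact_mod_cast this.symm
  obtain ⟨i₀, hi₀⟩ := Finset.card_eq_one.mp hcard
  have hμval : ∀ i, μ i = if i = i₀ then 1 else 0 := by
    intro i
    by_cases h : i = i₀
    · subst h
      have : i ∈ Finset.univ.filter (fun i => μ i = 1) := hi₀ ▸ Finset.mem_singleton_self i
      simpa using (Finset.mem_filter.mp this).2
    · rcases hμ01 i with h' | h'
      · simp [h, h']
      · exfalso
        have : i ∈ Finset.univ.filter (fun i => μ i = 1) :=
          Finset.mem_filter.mpr ⟨Finset.mem_univ i, h'⟩
        rw [hi₀, Finset.mem_singleton] at this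
        exact h this
  refine ⟨(WithLp.toLp 2 (fun a => V a i₀) : EuclideanSpace ℂ (Fin d)), fun a b => ?_⟩
  have hBV : B = V * Matrix.diagonal (fun i => ((μ i : ℝ) : ℂ)) * Vᴴ := by
    rw [← hD]
    calc B = (V * Vᴴ) * B * (V * Vᴴ) := by rw [hV1]; simp
      _ = V * (Vᴴ * B * V) * Vᴴ := by simp only [Matrix.mul_assoc]
  rw [hBV, aux_conj_diag_entry]
  rw [Finset.sum_eq_single i₀]
  · rw [hμval i₀]; simp
  · intro x _ hx; rw [hμval x]; simp [hx]
  · intro hx; exact absurd (Finset.mem_univ i₀) hx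

lemma aux_extend {d : ℕ} {ι : Type} [Fintype ι] (v : ι → EuclideanSpace ℂ (Fin d))
    (hv : Orthonormal ℂ v) :
    ∃ (e : ι ↪ Fin d) (b : OrthonormalBasis (Fin d) ℂ (EuclideanSpace ℂ (Fin d))),
      ∀ n, b (e n) = v n := by
  classical
  have hcard : Fintype.card ι ≤ d := by
    have := hv.linearIndependent.fintype_card_le_finrank
    rwa [finrank_euclideanSpace_fin] at this
  obtain ⟨e⟩ : Nonempty (ι ↪ Fin d) := by
    rw [← Fintype.card_fin d] at hcard
    exact Function.Embedding.nonempty_of_card_le hcard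
  set v' : Fin d → EuclideanSpace ℂ (Fin d) := Function.extend e v 0 with hv'def
  have hv'e : ∀ n, v' (e n) = v n := fun n => e.injective.extend_apply v 0 n
  have hres : Orthonormal ℂ ((Set.range e).restrict v') := by
    rw [orthonormal_iff_ite]
    rintro ⟨i, n, rfl⟩ ⟨j, m, rfl⟩
    show inner ℂ (v' (e n)) (v' (e m)) = _
    rw [hv'e, hv'e]
    have := orthonormal_iff_ite.mp hv n m
    rw [this]
    by_cases h : n = m
    · subst h; simp
    · have h2 : (⟨e n, ⟨n, rfl⟩⟩ : Set.range e) ≠ ⟨e m, ⟨m, rfl⟩⟩ := by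
        intro hc
        exact h (e.injective (congrArg Subtype.val hc))
      simp [h, h2]
  obtain ⟨b, hb⟩ := Orthonormal.exists_orthonormalBasis_extension_of_card_eq
    (𝕜 := ℂ) (by simp [finrank_euclideanSpace_fin]) hres
  exact ⟨e, b, fun n => by rw [hb (e n) ⟨n, rfl⟩, hv'e]⟩

/-- For the pinching channel `Λ(σ) = Σⱼ Pⱼ σ Pⱼ` given by the rank-one projections
`Pⱼ = |fⱼ⟩⟨fⱼ|` of an orthonormal basis, every orthogonal Schatten decomposition
`ρ = Σₙ λₙ Eₙ` satisfies `Σₙ λₙ · S^U(Λ Eₙ, Λ ρ) ≤ min {S(ρ), S(Λρ)}`, where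
`S^U(Λ Eₙ, Λ ρ) = Σⱼ (⟨fⱼ, Eₙ fⱼ⟩ log ⟨fⱼ, Eₙ fⱼ⟩ − ⟨fⱼ, Eₙ fⱼ⟩ log ⟨fⱼ, ρ fⱼ⟩)`
(with `⟨fⱼ, Eₙ fⱼ⟩ = tr(Pⱼ Eₙ)`, `⟨fⱼ, ρ fⱼ⟩ = tr(Pⱼ ρ)`).  Hence Ohya's mutual
entropy `I₁(ρ,Λ)`, the supremum over all such decompositions, is at most
`min {S(ρ), S(Λρ)}`. -/
theorem ohya_mutual_entropy_bound (d : ℕ) (hd : 0 < d) {ι : Type} [Fintype ι]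
    (ρ : Matrix (Fin d) (Fin d) ℂ)
    (hρpsd : ρ.PosSemidef) (hρtr : ρ.trace = 1)
    (f : Fin d → EuclideanSpace ℂ (Fin d)) (hf : Orthonormal ℂ f)
    (P : Fin d → Matrix (Fin d) (Fin d) ℂ)
    (hP : ∀ j a b, P j a b = f j a * (starRingEnd ℂ) (f j b))
    (Λ : Matrix (Fin d) (Fin d) ℂ → Matrix (Fin d) (Fin d) ℂ)
    (hΛ : ∀ σ, Λ σ = ∑ j, P j * σ * P j)
    (lam : ι → ℝ) (hlam : ∀ n, 0 < lam n) (hlamsum : ∑ n, lam n = 1)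
    (E : ι → Matrix (Fin d) (Fin d) ℂ)
    (hEherm : ∀ n, (E n).IsHermitian)
    (hEidem : ∀ n, E n * E n = E n)
    (hErank : ∀ n, (E n).trace = 1)
    (hEorth : ∀ m n, m ≠ n → E m * E n = 0)
    (hdecomp : ρ = ∑ n, ((lam n : ℝ) : ℂ) • E n)
    (SU : ι → ℝ)
    (hSU : ∀ n, SU n = ∑ j,
      (((P j * E n).trace).re * Real.log ((P j * E n).trace).re
        - ((P j * E n).trace).re * Real.log ((P j * ρ).trace).re)) :
    (∑ n, lam n * SU n) ≤ min (vnEntropy ρ) (vnEntropy (Λ ρ)) := by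
  classical
  -- rank-one vectors for the Eₙ
  have hvex : ∀ n, ∃ w : EuclideanSpace ℂ (Fin d),
      ∀ a b, E n a b = w a * (starRingEnd ℂ) (w b) :=
    fun n => aux_rank_one _ (hEherm n) (hEidem n) (hErank n)
  choose v hv using hvex
  -- trace formula
  have htrf : ∀ (j : Fin d) (M : Matrix (Fin d) (Fin d) ℂ),
      (P j * M).trace = ∑ a, ∑ x, f j a * (starRingEnd ℂ) (f j x) * M x a := by
    intro j M
    rw [Matrix.trace]
    apply Finset.sum_congr rfl
    intro a _
    rw [Matrix.diag_apply, Matrix.mul_apply]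
    exact Finset.sum_congr rfl fun x _ => by rw [hP]
  -- p and its properties
  set p : ι → Fin d → ℝ := fun n j => ((P j * E n).trace).re with hpdef
  set q : Fin d → ℝ := fun j => ((P j * ρ).trace).re with hqdef
  have htrE : ∀ n j, (P j * E n).trace = ((p n j : ℝ) : ℂ) ∧ 0 ≤ p n j := by
    intro n j
    set w : ℂ := ∑ x, (starRingEnd ℂ) (f j x) * v n x with hwdef
    have htr : (P j * E n).trace = w * (starRingEnd ℂ) w := by
      rw [htrf, hwdef]
      rw [map_sum, Finset.sum_mul_sum]
      rw [Finset.sum_comm]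
      apply Finset.sum_congr rfl; intro a _
      apply Finset.sum_congr rfl; intro x _
      rw [hv]
      simp only [map_mul, RingHom.coe_comp, Function.comp_apply, RingHomCompTriple.comp_apply,
        Complex.conj_conj, RingHom.id_apply]
      ring
    have hns : (P j * E n).trace = ((Complex.normSq w : ℝ) : ℂ) := by
      rw [htr, Complex.mul_conj]
    have hpw : p n j = Complex.normSq w := by
      show ((P j * E n).trace).re = _
      rw [hns]; simp
    refine ⟨?_, ?_⟩
    · rw [hns, hpw]
    · rw [hpw]; exact Complex.normSq_nonneg w
  have hpnn : ∀ n j, 0 ≤ p n j := fun n j => (htrE n j).2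
  -- q in terms of p
  have htrq : ∀ j, (P j * ρ).trace = ((∑ n, lam n * p n j : ℝ) : ℂ) := by
    intro j
    rw [hdecomp, Finset.mul_sum, Matrix.trace_sum]
    push_cast
    apply Finset.sum_congr rfl
    intro n _
    rw [Matrix.mul_smul, Matrix.trace_smul, (htrE n j).1]
    simp
  have hq : ∀ j, q j = ∑ n, lam n * p n j := by
    intro j
    show ((P j * ρ).trace).re = _
    rw [htrq]; simp
  have hqnn : ∀ j, 0 ≤ q j := by
    intro j
    rw [hq]
    exact Finset.sum_nonneg fun n _ => mul_nonneg (hlam n).le (hpnn n j)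
  have hlampq : ∀ n j, lam n * p n j ≤ q j := by
    intro n j
    rw [hq]
    exact Finset.single_le_sum (fun m _ => mul_nonneg (hlam m).le (hpnn m j)) (Finset.mem_univ n)
  -- sum of P j is 1
  have hPsum : (∑ j, P j) = 1 := by
    ext a b
    rw [Matrix.sum_apply]
    rw [Matrix.one_apply]
    rw [← aux_completeness f hf a b]
    exact Finset.sum_congr rfl fun j _ => (hP j a b)
  have hp1 : ∀ n, ∑ j, p n j = 1 := by
    intro n
    have h1 : ∑ j, (P j * E n).trace = 1 := by
      rw [← Matrix.trace_sum, ← Finset.sum_mul, hPsum, Matrix.one_mul, hErank]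
    have h2 : ∑ j, (((p n j : ℝ)) : ℂ) = 1 := by
      rw [← h1]; exact Finset.sum_congr rfl fun j _ => ((htrE n j).1).symm
    exact_mod_cast (by push_cast at h2 ⊢; exact h2 : ((∑ j, p n j : ℝ) : ℂ) = 1)
  have hple : ∀ n j, p n j ≤ 1 := by
    intro n j
    rw [← hp1 n]
    exact Finset.single_le_sum (fun m _ => hpnn n m) (Finset.mem_univ j)
  -- Λρ structure
  have hPMP : ∀ (j : Fin d) (a b : Fin d),
      (P j * ρ * P j) a b = (P j * ρ).trace * (f j a * (starRingEnd ℂ) (f j b)) := by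
    intro j a b
    calc (P j * ρ * P j) a b
        = ∑ x, (∑ y, P j a y * ρ y x) * P j x b := by
          rw [Matrix.mul_apply]
          exact Finset.sum_congr rfl fun x _ => by rw [Matrix.mul_apply]
      _ = (∑ x, ∑ y, f j x * (starRingEnd ℂ) (f j y) * ρ y x)
            * (f j a * (starRingEnd ℂ) (f j b)) := by
          rw [Finset.sum_mul]
          refine Finset.sum_congr rfl fun x _ => ?_
          rw [Finset.sum_mul, Finset.sum_mul]
          refine Finset.sum_congr rfl fun y _ => ?_
          rw [hP, hP]
          ring
      _ = (P j * ρ).trace * (f j a * (starRingEnd ℂ) (f j b)) := by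
          rw [htrf]
  have hΛentry : ∀ a b, (Λ ρ) a b
      = ∑ j, ((q j : ℝ) : ℂ) * f j a * (starRingEnd ℂ) (f j b) := by
    intro a b
    rw [hΛ, Matrix.sum_apply]
    apply Finset.sum_congr rfl
    intro j _
    rw [hPMP, htrq j, ← hq j]
    ring
  have hΛherm : (Λ ρ).IsHermitian := by
    rw [Matrix.IsHermitian]
    ext a b
    rw [Matrix.conjTranspose_apply, hΛentry, hΛentry, RCLike.star_def, map_sum]
    apply Finset.sum_congr rfl
    intro j _
    simp only [map_mul, Complex.conj_conj, Complex.conj_ofReal]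
    ring
  -- entropy of Λρ
  have hSΛ : vnEntropy (Λ ρ) = ∑ j, -(q j * Real.log (q j)) := by
    rw [vnEntropy, dif_pos hΛherm]
    exact aux_entropy_onb (Λ ρ) hΛherm f hf q hΛentry (fun x => -(x * Real.log x))
  -- entropy of ρ
  have hvon : Orthonormal ℂ v := by
    rw [orthonormal_iff_ite]
    intro n m
    rw [PiLp.inner_apply]
    simp only [RCLike.inner_apply]
    by_cases h : n = m
    · subst h
      rw [if_pos rfl]
      have h1 := hErank n
      rw [Matrix.trace] at h1
      rw [← h1]
      apply Finset.sum_congr rfl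
      intro x _
      rw [Matrix.diag_apply, hv]
    · rw [if_neg h]
      have hz := hEorth n m h
      have hnz : ∀ k : ι, ∃ a, v k a ≠ 0 := by
        intro k
        by_contra hc
        push_neg at hc
        have : (E k).trace = 0 := by
          rw [Matrix.trace]
          apply Finset.sum_eq_zero
          intro a _
          rw [Matrix.diag_apply, hv, hc a]
          simp
        rw [hErank k] at this
        exact one_ne_zero this
      obtain ⟨a, ha⟩ := hnz n
      obtain ⟨b, hb⟩ := hnz m
      have h0 : ∑ x, E n a x * E m x b = 0 := by
        have h' := congrFun (congrFun hz a) b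
        rw [Matrix.mul_apply] at h'
        simpa using h'
      have h0' : v n a * (starRingEnd ℂ) (v m b) * ∑ x, (starRingEnd ℂ) (v n x) * v m x = 0 := by
        rw [← h0, Finset.mul_sum]
        apply Finset.sum_congr rfl
        intro x _
        rw [hv, hv]
        ring
      rcases mul_eq_zero.mp h0' with h' | h'
      · rcases mul_eq_zero.mp h' with h'' | h''
        · exact absurd h'' ha
        · exact absurd h'' (by simpa using hb)
      · rw [← h']; exact Finset.sum_congr rfl fun x _ => mul_comm _ _
  obtain ⟨e, b, hb⟩ := aux_extend v hvon
  set c : Fin d → ℝ := fun k => if h : ∃ n, e n = k then lam h.choose else 0 with hcdef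
  have hce : ∀ n, c (e n) = lam n := by
    intro n
    have hex : ∃ m, e m = e n := ⟨n, rfl⟩
    rw [hcdef]
    simp only
    rw [dif_pos hex]
    exact congrArg lam (e.injective hex.choose_spec)
  have hc0 : ∀ k, (¬ ∃ n, e n = k) → c k = 0 := by
    intro k h
    rw [hcdef]; simp only; rw [dif_neg h]
  have hsum_image : ∀ (F : Fin d → ℂ), (∀ k, (¬ ∃ n, e n = k) → F k = 0) →
      ∑ k, F k = ∑ n, F (e n) := by
    intro F hF
    rw [← Finset.sum_image (f := F) (fun x _ y _ h => e.injective h)]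
    apply (Finset.sum_subset (Finset.subset_univ _) ?_).symm
    intro k _ hk
    apply hF
    intro ⟨n, hn⟩
    exact hk (Finset.mem_image.mpr ⟨n, Finset.mem_univ n, hn⟩)
  have hρentry : ∀ a b', ρ a b'
      = ∑ k, ((c k : ℝ) : ℂ) * b k a * (starRingEnd ℂ) (b k b') := by
    intro a b'
    rw [hsum_image _ (fun k hk => by rw [hc0 k hk]; simp)]
    rw [hdecomp, Matrix.sum_apply]
    apply Finset.sum_congr rfl
    intro n _
    rw [Matrix.smul_apply, hv, hce, hb]
    simp only [smul_eq_mul]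
    ring
  have hSρ : vnEntropy ρ = ∑ n, -(lam n * Real.log (lam n)) := by
    rw [vnEntropy, dif_pos hρpsd.1]
    rw [aux_entropy_onb ρ hρpsd.1 (fun k => b k) b.orthonormal c hρentry
      (fun x => -(x * Real.log x))]
    have hsum_image' : ∀ (F : Fin d → ℝ), (∀ k, (¬ ∃ n, e n = k) → F k = 0) →
        ∑ k, F k = ∑ n, F (e n) := by
      intro F hF
      rw [← Finset.sum_image (f := F) (fun x _ y _ h => e.injective h)]
      apply (Finset.sum_subset (Finset.subset_univ _) ?_).symm
      intro k _ hk
      apply hF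
      intro ⟨n, hn⟩
      exact hk (Finset.mem_image.mpr ⟨n, Finset.mem_univ n, hn⟩)
    rw [hsum_image' _ (fun k hk => by rw [hc0 k hk]; simp)]
    apply Finset.sum_congr rfl
    intro n _
    rw [hce]
  -- rewrite SU
  have hSU' : ∀ n, SU n = ∑ j, (p n j * Real.log (p n j) - p n j * Real.log (q j)) := hSU
  rw [hSρ, hSΛ]
  apply le_min
  -- Bound by S(ρ)
  · have key : ∀ n j,
        lam n * (p n j * Real.log (p n j) - p n j * Real.log (q j))
          + lam n * p n j * Real.log (lam n) ≤ 0 := by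
      intro n j
      rcases eq_or_lt_of_le (hpnn n j) with h0 | h0
      · rw [← h0]; simp
      · have hqpos : 0 < q j := lt_of_lt_of_le (mul_pos (hlam n) h0) (hlampq n j)
        have hlog : Real.log (lam n * p n j) ≤ Real.log (q j) :=
          Real.log_le_log (mul_pos (hlam n) h0) (hlampq n j)
        rw [Real.log_mul (hlam n).ne' h0.ne'] at hlog
        nlinarith [mul_pos (hlam n) h0]
    have hexp : ∑ n, lam n * SU n
        = (∑ n, ∑ j, (lam n * (p n j * Real.log (p n j) - p n j * Real.log (q j))
            + lam n * p n j * Real.log (lam n)))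
          + ∑ n, -(lam n * Real.log (lam n)) := by
      rw [← Finset.sum_add_distrib]
      apply Finset.sum_congr rfl
      intro n _
      rw [hSU' n, Finset.mul_sum]
      have hmid : ∑ j, lam n * p n j * Real.log (lam n)
          = lam n * Real.log (lam n) := by
        have : ∑ j, lam n * p n j * Real.log (lam n)
            = (lam n * Real.log (lam n)) * ∑ j, p n j := by
          rw [Finset.mul_sum]
          exact Finset.sum_congr rfl fun j _ => by ring
        rw [this, hp1 n, mul_one]
      rw [Finset.sum_add_distrib, hmid]
      ring
    rw [hexp]
    have : ∑ n, ∑ j, (lam n * (p n j * Real.log (p n j) - p n j * Real.log (q j))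
        + lam n * p n j * Real.log (lam n)) ≤ 0 :=
      Finset.sum_nonpos fun n _ => Finset.sum_nonpos fun j _ => key n j
    linarith
  -- Bound by S(Λρ)
  · have hexp : ∑ n, lam n * SU n
        = (∑ n, ∑ j, lam n * (p n j * Real.log (p n j)))
          + ∑ j, -(q j * Real.log (q j)) := by
      have h1 : ∑ n, lam n * SU n
          = ∑ n, ∑ j, (lam n * (p n j * Real.log (p n j))
              - lam n * (p n j * Real.log (q j))) := by
        apply Finset.sum_congr rfl
        intro n _
        rw [hSU' n, Finset.mul_sum]
        exact Finset.sum_congr rfl fun j _ => by ring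
      rw [h1]
      have h2 : ∀ n, ∑ j, (lam n * (p n j * Real.log (p n j))
          - lam n * (p n j * Real.log (q j)))
          = (∑ j, lam n * (p n j * Real.log (p n j)))
            - ∑ j, lam n * (p n j * Real.log (q j)) := fun n => Finset.sum_sub_distrib _ _
      simp_rw [h2]
      rw [Finset.sum_sub_distrib]
      have h3 : ∑ n, ∑ j, lam n * (p n j * Real.log (q j))
          = ∑ j, q j * Real.log (q j) := by
        rw [Finset.sum_comm]
        apply Finset.sum_congr rfl
        intro j _
        have : ∑ n, lam n * (p n j * Real.log (q j))
            = (∑ n, lam n * p n j) * Real.log (q j) := by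
          rw [Finset.sum_mul]
          exact Finset.sum_congr rfl fun n _ => by ring
        rw [this, ← hq j]
      rw [h3, Finset.sum_neg_distrib]
      ring
    rw [hexp]
    have hplogp : ∀ n j, lam n * (p n j * Real.log (p n j)) ≤ 0 := by
      intro n j
      apply mul_nonpos_of_nonneg_of_nonpos (hlam n).le
      rcases eq_or_lt_of_le (hpnn n j) with h0 | h0
      · rw [← h0]; simp
      · exact mul_nonpos_of_nonneg_of_nonpos h0.le (Real.log_nonpos h0.le (hple n j))
    have : ∑ n, ∑ j, lam n * (p n j * Real.log (p n j)) ≤ 0 :=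
      Finset.sum_nonpos fun n _ => Finset.sum_nonpos fun j _ => hplogp n j
    linarith
end
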